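/- arXiv:2605.15849 — 2 statements merged into one kernel-verified Lean document; each statement's English description precedes it below -/
import Mathlib

section
/- Let H : ℝ^n → ℝ be a norm which is C² on ℝ^n \ {0} and whose unit ball {H ≤ 1} is strictly convex, and let H° be its polar norm (which is then also C¹ on ℝ^n \ {0}). Then for every ξ ≠ 0 one has H°(ξ) ∇H(∇H°(ξ)) = ξ and H(ξ) ∇H°(∇H(ξ)) = ξ. -/
open MeasureTheory Set
open scoped ENNReal

noncomputable section

/-- `H` is an anisotropic norm: positive away from `0`, absolutely homogeneous,
and subadditive. -/
def IsAnisoNorm {n : ℕ} (H : EuclideanSpace ℝ (Fin n) → ℝ) : Prop :=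
  (∀ ξ : EuclideanSpace ℝ (Fin n), ξ ≠ 0 → 0 < H ξ) ∧
  (∀ (t : ℝ) (ξ : EuclideanSpace ℝ (Fin n)), H (t • ξ) = |t| * H ξ) ∧
  (∀ ξ η : EuclideanSpace ℝ (Fin n), H (ξ + η) ≤ H ξ + H η)

/-- The polar norm `H°(x) = sup_{ξ ≠ 0} ⟨x, ξ⟩ / H(ξ)`. -/
def polar {n : ℕ} (H : EuclideanSpace ℝ (Fin n) → ℝ)
    (x : EuclideanSpace ℝ (Fin n)) : ℝ :=
  ⨆ ξ : {ξ : EuclideanSpace ℝ (Fin n) // ξ ≠ 0},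
    (inner ℝ x (ξ : EuclideanSpace ℝ (Fin n)) : ℝ) / H ξ

/-!
`H°(x)` is the maximum of `⟪x, ·⟫` on the compact sphere `{H = 1}`. For `x ≠ 0` strict convexity
makes the maximiser `η(x)` unique, hence continuous in `x`, and the squeeze
`0 ≤ H°(y) - H°(x) - ⟪η(x), y - x⟫ ≤ ⟪y - x, η(y) - η(x)⟫` gives `∇H°(x) = η(x)`.
Since `H` is convex, `∇H(p)` is its only subgradient at `p`, and by homogeneity
`⟪∇H(p), ·⟫ ≤ H` with equality at `p`. Hence `ξ / H°(ξ)` is the gradient of `H` at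
`η(ξ) = ∇H°(ξ)`, and `ξ / H(ξ)` is the maximiser `η(∇H(ξ)) = ∇H°(∇H(ξ))`.
-/

open Filter Topology
open scoped RealInnerProductSpace Gradient

theorem MapClusterPt.prodMk {α X Y : Type*} [TopologicalSpace X] [TopologicalSpace Y]
    {l : Filter α} {u : α → X} {f : α → Y} {x : X} {z : Y} (hu : Tendsto u l (𝓝 x))
    (hf : MapClusterPt z l f) : MapClusterPt (x, z) l fun a => (u a, f a) := by
  rw [((𝓝 x).basis_sets.prod_nhds (𝓝 z).basis_sets).mapClusterPt_iff_frequently]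
  rintro ⟨U, V⟩ ⟨hU, hV⟩
  exact ((mapClusterPt_iff_frequently.1 hf V hV).and_eventually (hu hU)).mono
    fun a ha => ⟨ha.2, ha.1⟩

section Subgradient

variable {E : Type*} [NormedAddCommGroup E] [InnerProductSpace ℝ E] [CompleteSpace E]
  {f : E → ℝ} {g p : E}

theorem ConvexOn.add_inner_sub_le_of_hasGradientAt (hf : ConvexOn ℝ univ f)
    (hg : HasGradientAt f g p) (y : E) : f p + ⟪g, y - p⟫ ≤ f y := by
  have hφ := hf.comp_affineMap (AffineMap.lineMap (k := ℝ) p y)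
  have hderiv : HasDerivAt (f ∘ AffineMap.lineMap (k := ℝ) p y) ⟪g, y - p⟫ 0 := by
    have := hg.hasFDerivAt
    rw [← AffineMap.lineMap_apply_zero p y (k := ℝ)] at this
    exact this.comp_hasDerivAt 0 AffineMap.hasDerivAt_lineMap
  have := hφ.le_slope_of_hasDerivAt (mem_univ 0) (mem_univ 1) zero_lt_one hderiv
  simp only [slope_def_field, Function.comp_apply, AffineMap.lineMap_apply_zero,
    AffineMap.lineMap_apply_one, sub_zero, div_one] at this
  linarith

theorem HasGradientAt.eq_of_forall_add_inner_sub_le {v : E} (hg : HasGradientAt f g p)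
    (hv : ∀ y, f p + ⟪v, y - p⟫ ≤ f y) : g = v := by
  have hmin : IsLocalMin (fun y => f y - ⟪v, y⟫) p :=
    Eventually.of_forall fun y => by
      have := hv y
      rw [inner_sub_right] at this
      linarith
  have hzero := hmin.hasFDerivAt_eq_zero (hg.hasFDerivAt.sub (innerSL ℝ v).hasFDerivAt)
  rw [sub_eq_zero] at hzero
  apply (InnerProductSpace.toDual ℝ E).injective
  ext y
  simpa using congrArg (· y) hzero

end Subgradient

namespace IsAnisoNorm

open Asymptotics

variable {n : ℕ} {H : EuclideanSpace ℝ (Fin n) → ℝ} {g p x y η ζ : EuclideanSpace ℝ (Fin n)}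

theorem map_smul_of_nonneg (hH : IsAnisoNorm H) {t : ℝ} (ht : 0 ≤ t)
    (ξ : EuclideanSpace ℝ (Fin n)) : H (t • ξ) = t * H ξ := by
  rw [hH.2.1, abs_of_nonneg ht]

theorem map_zero (hH : IsAnisoNorm H) : H 0 = 0 := by
  simpa using hH.map_smul_of_nonneg le_rfl 0

theorem ne_zero_of_map_eq_one (hH : IsAnisoNorm H) (hη : H η = 1) : η ≠ 0 := by
  rintro rfl
  simp [hH.map_zero] at hη

theorem map_inv_smul_self (hH : IsAnisoNorm H) (hx : x ≠ 0) : H ((H x)⁻¹ • x) = 1 := by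
  rw [hH.map_smul_of_nonneg (inv_nonneg.2 (hH.1 x hx).le), inv_mul_cancel₀ (hH.1 x hx).ne']

theorem convexOn (hH : IsAnisoNorm H) : ConvexOn ℝ univ H :=
  ⟨convex_univ, fun x _ y _ a b ha hb _ => by
    simpa only [hH.map_smul_of_nonneg ha, hH.map_smul_of_nonneg hb, smul_eq_mul]
      using hH.2.2 (a • x) (b • y)⟩

theorem continuous (hH : IsAnisoNorm H) : Continuous H :=
  continuousOn_univ.1 (hH.convexOn.continuousOn isOpen_univ)

theorem exists_pos_mul_norm_le (hH : IsAnisoNorm H) [Nontrivial (EuclideanSpace ℝ (Fin n))] :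
    ∃ a, 0 < a ∧ ∀ ξ, a * ‖ξ‖ ≤ H ξ := by
  obtain ⟨z, hz, hmin⟩ := (isCompact_sphere (0 : EuclideanSpace ℝ (Fin n)) 1).exists_isMinOn
    (NormedSpace.sphere_nonempty.2 zero_le_one) hH.continuous.continuousOn
  have hz0 : z ≠ 0 := ne_zero_of_mem_unit_sphere ⟨z, hz⟩
  refine ⟨H z, hH.1 z hz0, fun ξ => ?_⟩
  rcases eq_or_ne ξ 0 with rfl | hξ
  · simp [hH.map_zero]
  have hξn : 0 < ‖ξ‖ := norm_pos_iff.2 hξ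
  have hsphere : ‖ξ‖⁻¹ • ξ ∈ Metric.sphere (0 : EuclideanSpace ℝ (Fin n)) 1 := by
    simp [norm_smul, hξn.ne']
  have : H z ≤ H (‖ξ‖⁻¹ • ξ) := hmin hsphere
  rwa [hH.map_smul_of_nonneg (inv_nonneg.2 hξn.le), ← div_eq_inv_mul, le_div_iff₀ hξn] at this

theorem isCompact_unitSphere (hH : IsAnisoNorm H) [Nontrivial (EuclideanSpace ℝ (Fin n))] :
    IsCompact {η | H η = 1} := by
  obtain ⟨a, ha, hle⟩ := hH.exists_pos_mul_norm_le
  refine Metric.isCompact_of_isClosed_isBounded (isClosed_eq hH.continuous continuous_const)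
    ((Metric.isBounded_closedBall (x := 0) (r := a⁻¹)).subset fun η (hη : H η = 1) => ?_)
  rw [mem_closedBall_zero_iff, ← one_div, le_div_iff₀ ha, mul_comm, ← hη]
  exact hle η

theorem lt_one_of_mem_interior (hH : IsAnisoNorm H) {m : EuclideanSpace ℝ (Fin n)}
    (hm : m ∈ interior {ξ | H ξ ≤ 1}) : H m < 1 := by
  have hcont : Continuous fun c : ℝ => c • m := continuous_id.smul continuous_const
  have hev : ∀ᶠ c : ℝ in 𝓝 1, c • m ∈ interior {ξ | H ξ ≤ 1} :=
    hcont.continuousAt.preimage_mem_nhds (by simpa using isOpen_interior.mem_nhds hm)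
  obtain ⟨c, hc, hc_int⟩ := hev.exists_gt
  have hcm : c * H m ≤ 1 := by
    simpa [hH.map_smul_of_nonneg (zero_le_one.trans hc.le)] using interior_subset hc_int
  nlinarith

theorem inner_le_of_hasGradientAt (hH : IsAnisoNorm H)
    (hg : HasGradientAt H g p) (z : EuclideanSpace ℝ (Fin n)) : ⟪g, z⟫ ≤ H z := by
  have := hH.convexOn.add_inner_sub_le_of_hasGradientAt hg (p + z)
  rw [add_sub_cancel_left] at this
  linarith [hH.2.2 p z]

theorem inner_eq_of_hasGradientAt (hH : IsAnisoNorm H) (hg : HasGradientAt H g p) :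
    ⟪g, p⟫ = H p := by
  have := hH.convexOn.add_inner_sub_le_of_hasGradientAt hg 0
  rw [zero_sub, inner_neg_right, hH.map_zero] at this
  linarith [hH.inner_le_of_hasGradientAt hg p]

theorem nonempty_unitSphere (hH : IsAnisoNorm H) [Nontrivial (EuclideanSpace ℝ (Fin n))] :
    {η | H η = 1}.Nonempty :=
  let ⟨_, hξ⟩ := exists_ne (0 : EuclideanSpace ℝ (Fin n))
  ⟨_, hH.map_inv_smul_self hξ⟩

theorem range_div_eq_image_unitSphere (hH : IsAnisoNorm H) (x : EuclideanSpace ℝ (Fin n)) :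
    range (fun ξ : {ξ : EuclideanSpace ℝ (Fin n) // ξ ≠ 0} => ⟪x, ξ⟫ / H ξ) =
      (⟪x, ·⟫) '' {η | H η = 1} := by
  ext r
  constructor
  · rintro ⟨⟨ξ, hξ⟩, rfl⟩
    refine ⟨(H ξ)⁻¹ • ξ, hH.map_inv_smul_self hξ, ?_⟩
    simp only [real_inner_smul_right, div_eq_inv_mul]
  · rintro ⟨η, hη, rfl⟩
    exact ⟨⟨η, hH.ne_zero_of_map_eq_one hη⟩, by simp [show H η = 1 from hη]⟩

theorem isGreatest_polar (hH : IsAnisoNorm H) [Nontrivial (EuclideanSpace ℝ (Fin n))]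
    (x : EuclideanSpace ℝ (Fin n)) :
    IsGreatest ((⟪x, ·⟫) '' {η | H η = 1}) (polar H x) := by
  rw [polar, iSup, hH.range_div_eq_image_unitSphere]
  exact (hH.isCompact_unitSphere.image (continuous_const.inner continuous_id)).isGreatest_sSup
    (hH.nonempty_unitSphere.image _)

theorem exists_inner_eq_polar (hH : IsAnisoNorm H) [Nontrivial (EuclideanSpace ℝ (Fin n))]
    (x : EuclideanSpace ℝ (Fin n)) : ∃ η, H η = 1 ∧ ⟪x, η⟫ = polar H x :=
  (hH.isGreatest_polar x).1

theorem inner_le_polar_mul (hH : IsAnisoNorm H) (x z : EuclideanSpace ℝ (Fin n)) :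
    ⟪x, z⟫ ≤ polar H x * H z := by
  rcases eq_or_ne z 0 with rfl | hz
  · simp [hH.map_zero]
  have := nontrivial_of_ne z 0 hz
  have : ⟪x, (H z)⁻¹ • z⟫ ≤ polar H x :=
    (hH.isGreatest_polar x).2 ⟨_, hH.map_inv_smul_self hz, rfl⟩
  rwa [real_inner_smul_right, inv_mul_le_iff₀ (hH.1 z hz), mul_comm] at this

theorem polar_pos (hH : IsAnisoNorm H) (hx : x ≠ 0) : 0 < polar H x := by
  have := hH.inner_le_polar_mul x x
  rw [real_inner_self_eq_norm_sq] at this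
  exact pos_of_mul_pos_left (lt_of_lt_of_le (by positivity) this) (hH.1 x hx).le

theorem eq_of_inner_eq_polar (hH : IsAnisoNorm H)
    (hconv : StrictConvex ℝ {ξ | H ξ ≤ 1}) (hx : x ≠ 0) (hη : H η ≤ 1)
    (hxη : ⟪x, η⟫ = polar H x) (hζ : H ζ ≤ 1) (hxζ : ⟪x, ζ⟫ = polar H x) : η = ζ := by
  by_contra hne
  -- the midpoint lies in the interior of `{H ≤ 1}`, where `H < 1`, yet still attains `H°(x)`
  set m := (1 / 2 : ℝ) • η + (1 / 2 : ℝ) • ζ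
  have hm : H m < 1 := hH.lt_one_of_mem_interior
    (hconv hη hζ hne (by norm_num) (by norm_num) (by norm_num))
  have hxm : ⟪x, m⟫ = polar H x := by
    rw [inner_add_right, real_inner_smul_right, real_inner_smul_right, hxη, hxζ]
    ring
  have := hH.inner_le_polar_mul x m
  nlinarith [hH.polar_pos hx]

theorem tendsto_of_inner_eq_polar (hH : IsAnisoNorm H) (hconv : StrictConvex ℝ {ξ | H ξ ≤ 1})
    (hx : x ≠ 0) {m : EuclideanSpace ℝ (Fin n) → EuclideanSpace ℝ (Fin n)}
    (hm₁ : ∀ y, H (m y) = 1) (hm : ∀ y, ⟪y, m y⟫ = polar H y) :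
    Tendsto m (𝓝 x) (𝓝 (m x)) := by
  have := nontrivial_of_ne x 0 hx
  refine hH.isCompact_unitSphere.tendsto_nhds_of_unique_mapClusterPt
    (Eventually.of_forall hm₁) fun z (hz : H z = 1) hcl => ?_
  have hclosed : IsClosed {q : EuclideanSpace ℝ (Fin n) × EuclideanSpace ℝ (Fin n) |
      ⟪q.1, m x⟫ ≤ ⟪q.1, q.2⟫} := isClosed_le (by fun_prop) (by fun_prop)
  have hle : ⟪x, m x⟫ ≤ ⟪x, z⟫ :=
    hclosed.mem_of_mapClusterPt (hcl.prodMk tendsto_id) (Eventually.of_forall fun y => by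
      simpa [hm₁, hm] using hH.inner_le_polar_mul y (m x))
  have hge := hH.inner_le_polar_mul x z
  rw [hz, mul_one] at hge
  exact hH.eq_of_inner_eq_polar hconv hx hz.le (by linarith [hm x]) (hm₁ x).le (hm x)

theorem abs_polar_sub_polar_sub_inner_le (hH : IsAnisoNorm H) (hη : H η = 1)
    (hxη : ⟪x, η⟫ = polar H x) (hζ : H ζ = 1) (hyζ : ⟪y, ζ⟫ = polar H y) :
    |polar H y - polar H x - ⟪η, y - x⟫| ≤ ‖y - x‖ * ‖ζ - η‖ := by
  have hy := hH.inner_le_polar_mul y η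
  have hx := hH.inner_le_polar_mul x ζ
  have hcs := real_inner_le_norm (y - x) (ζ - η)
  rw [hη, mul_one] at hy
  rw [hζ, mul_one] at hx
  rw [real_inner_comm, abs_le]
  simp only [inner_sub_left, inner_sub_right] at hcs ⊢
  constructor <;> linarith

theorem hasGradientAt_polar (hH : IsAnisoNorm H) (hconv : StrictConvex ℝ {ξ | H ξ ≤ 1})
    (hx : x ≠ 0) (hη : H η = 1) (hxη : ⟪x, η⟫ = polar H x) :
    HasGradientAt (polar H) η x := by
  have := nontrivial_of_ne x 0 hx
  choose m hm₁ hm using hH.exists_inner_eq_polar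
  have hmx : m x = η := hH.eq_of_inner_eq_polar hconv hx (hm₁ x).le (hm x) hη.le hxη
  have hlim : (fun y => ‖m y - η‖) =o[𝓝 x] fun _ => (1 : ℝ) := by
    rw [isLittleO_one_iff, ← hmx]
    exact tendsto_iff_norm_sub_tendsto_zero.1 (hH.tendsto_of_inner_eq_polar hconv hx hm₁ hm)
  have hsmall : (fun y => ‖y - x‖ * ‖m y - η‖) =o[𝓝 x] fun y => ‖y - x‖ := by
    simpa using (isBigO_refl (fun y => ‖y - x‖) (𝓝 x)).mul_isLittleO hlim
  rw [hasGradientAt_iff_isLittleO, ← isLittleO_norm_right]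
  refine IsBigO.trans_isLittleO (.of_bound 1 (Eventually.of_forall fun y => ?_)) hsmall
  simpa using hH.abs_polar_sub_polar_sub_inner_le hη hxη (hm₁ y) (hm y)

theorem eq_inv_polar_smul_of_hasGradientAt (hH : IsAnisoNorm H) (hx : x ≠ 0) (hη : H η = 1)
    (hxη : ⟪x, η⟫ = polar H x) (hg : HasGradientAt H g η) : g = (polar H x)⁻¹ • x := by
  have hpos := hH.polar_pos hx
  refine hg.eq_of_forall_add_inner_sub_le fun y => ?_
  rw [real_inner_smul_left, inner_sub_right, hxη, hη, mul_sub, inv_mul_cancel₀ hpos.ne',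
    add_sub_cancel, inv_mul_le_iff₀ hpos]
  linarith [hH.inner_le_polar_mul x y]

theorem polar_eq_one_of_hasGradientAt (hH : IsAnisoNorm H) (hp : p ≠ 0)
    (hg : HasGradientAt H g p) : polar H g = 1 := by
  have := nontrivial_of_ne p 0 hp
  refine (hH.isGreatest_polar g).unique ⟨⟨_, hH.map_inv_smul_self hp, ?_⟩, ?_⟩
  · dsimp only
    rw [real_inner_smul_right, hH.inner_eq_of_hasGradientAt hg, inv_mul_cancel₀ (hH.1 p hp).ne']
  · rintro _ ⟨z, hz, rfl⟩
    simpa [show H z = 1 from hz] using hH.inner_le_of_hasGradientAt hg z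

end IsAnisoNorm

/-- For a `C²`, strictly convex norm `H` with polar `H°`, one has
`H°(ξ) ∇H(∇H°(ξ)) = ξ` and `H(ξ) ∇H°(∇H(ξ)) = ξ` for every `ξ ≠ 0`. -/
theorem gradient_polar_inversion {n : ℕ}
    (H : EuclideanSpace ℝ (Fin n) → ℝ) (hH : IsAnisoNorm H)
    (hC2 : ContDiffOn ℝ 2 H ({0} : Set (EuclideanSpace ℝ (Fin n)))ᶜ)
    (hconv : StrictConvex ℝ {ξ : EuclideanSpace ℝ (Fin n) | H ξ ≤ 1}) :
    ∀ ξ : EuclideanSpace ℝ (Fin n), ξ ≠ 0 →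
      polar H ξ • gradient H (gradient (polar H) ξ) = ξ ∧
      H ξ • gradient (polar H) (gradient H ξ) = ξ := by
  intro ξ hξ
  have hgradH : ∀ p ≠ 0, HasGradientAt H (∇ H p) p := fun p hp =>
    ((hC2.contDiffAt (isOpen_compl_singleton.mem_nhds hp)).differentiableAt
      (by norm_num)).hasGradientAt
  have hHξ := hH.1 ξ hξ
  constructor
  · have := nontrivial_of_ne ξ 0 hξ
    obtain ⟨η, hη, hξη⟩ := hH.exists_inner_eq_polar ξ
    have hgη := hgradH η (hH.ne_zero_of_map_eq_one hη)
    rw [(hH.hasGradientAt_polar hconv hξ hη hξη).gradient,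
      hH.eq_inv_polar_smul_of_hasGradientAt hξ hη hξη hgη, smul_inv_smul₀ (hH.polar_pos hξ).ne']
  · have hg := hgradH ξ hξ
    have hg0 : ∇ H ξ ≠ 0 := by
      rintro h
      simpa [h, hHξ.ne] using hH.inner_eq_of_hasGradientAt hg
    have hmax : ⟪∇ H ξ, (H ξ)⁻¹ • ξ⟫ = polar H (∇ H ξ) := by
      rw [hH.polar_eq_one_of_hasGradientAt hξ hg, real_inner_smul_right,
        hH.inner_eq_of_hasGradientAt hg, inv_mul_cancel₀ hHξ.ne']
    rw [(hH.hasGradientAt_polar hconv hg0 (hH.map_inv_smul_self hξ) hmax).gradient,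
      smul_inv_smul₀ hHξ.ne']
end
end

section
/- Let Ω ⊂ ℝ^n be a bounded measurable set and let u : Ω → [0, ∞) be measurable with distribution function μ(t) = |{u > t}| and decreasing rearrangement u*. Assume ∫_0^∞ μ(t)^{1 − 1/n} dt < ∞ and define 𝒦(τ) = ∫_τ^∞ μ(t)^{1 − 1/n} dt for τ ≥ 0. Then the function s ↦ 𝒦(u*(s)) is nondecreasing and right-continuous on (0, |Ω|), and its Lebesgue–Stieltjes measure on (0, |Ω|) equals the measure with density s^{1 − 1/n} with respect to the Lebesgue–Stieltjes measure of the nondecreasing right-continuous function s ↦ −u*(s); that is, D[𝒦(u*)](E) = ∫_E s^{1 − 1/n} d(−Du*)(s) for every Borel set E ⊂ (0, |Ω|). -/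
open MeasureTheory Set
open scoped ENNReal

noncomputable section

/-- The distribution function `μ(t) = μ {x ∈ A : |g x| > t}`. -/
def distFun {α : Type*} [MeasurableSpace α] (μ : Measure α) (A : Set α)
    (g : α → ℝ) (t : ℝ) : ℝ≥0∞ :=
  μ {x ∈ A | t < |g x|}

/-- The decreasing rearrangement `g*(s) = inf {t ≥ 0 : μ(t) ≤ s}`. -/
def decRe {α : Type*} [MeasurableSpace α] (μ : Measure α) (A : Set α)
    (g : α → ℝ) (s : ℝ) : ℝ :=
  sInf {t : ℝ | 0 ≤ t ∧ distFun μ A g t ≤ ENNReal.ofReal s}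

/-!
The rearrangement is a generalized inverse of the distribution function: for `s > 0` and
`t ≥ 0`, `u*(s) ≤ t ↔ μ(t) ≤ s`. Hence, for `0 < x ≤ y`, Lebesgue measure on
`(u*(y), u*(x)]` and `D(-u*)` on `(x, y]` give the same mass to the superlevel sets
`{μ > r}` and `{s > r}` for every `r > 0`, and the layer-cake formula turns this into
`∫_{u*(y)}^{u*(x)} μ^p = ∫_{(x,y]} s^p d(-Du*)(s)` with `p = 1 - 1/n`. So `D[𝒦(u*)]` and
`s^p d(-Du*)` agree on intervals, hence on Borel sets.
-/

theorem Real.volume_Ioc_inter_Iio (a b c : ℝ) :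
    volume (Ioc a b ∩ Iio c) = ENNReal.ofReal (min b c - a) := by
  refine le_antisymm ?_ ?_
  · calc volume (Ioc a b ∩ Iio c) ≤ volume (Ioc a (min b c)) :=
          measure_mono fun t ht => ⟨ht.1.1, le_min ht.1.2 (le_of_lt ht.2)⟩
      _ = _ := Real.volume_Ioc
  · calc ENNReal.ofReal (min b c - a) = volume (Ioo a (min b c)) := Real.volume_Ioo.symm
      _ ≤ volume (Ioc a b ∩ Iio c) :=
          measure_mono fun t ht => ⟨⟨ht.1, (ht.2.trans_le (min_le_left b c)).le⟩,
            ht.2.trans_le (min_le_right b c)⟩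

theorem MeasureTheory.Measure.restrict_Ioo_eq_of_Ioc {μ ν : Measure ℝ}
    [IsLocallyFiniteMeasure μ] {l r : ℝ}
    (h : ∀ a b, l < a → a < b → b < r → μ (Ioc a b) = ν (Ioc a b)) :
    μ.restrict (Ioo l r) = ν.restrict (Ioo l r) := by
  have hU : Ioo l r = ⋃ q : {q : ℚ × ℚ // l < q.1 ∧ (q.2 : ℝ) < r}, Ioc (q.1.1 : ℝ) q.1.2 := by
    ext z
    simp only [mem_Ioo, mem_iUnion, mem_Ioc, Subtype.exists, Prod.exists]
    constructor
    · rintro ⟨hlz, hzr⟩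
      obtain ⟨a, hla, haz⟩ := exists_rat_btwn hlz
      obtain ⟨b, hzb, hbr⟩ := exists_rat_btwn hzr
      exact ⟨a, b, ⟨hla, hbr⟩, haz, hzb.le⟩
    · rintro ⟨a, b, ⟨hla, hbr⟩, haz, hzb⟩
      exact ⟨hla.trans haz, hzb.trans_lt hbr⟩
  rw [hU, Measure.restrict_iUnion_congr]
  rintro ⟨⟨a, b⟩, hla, hbr⟩
  refine Measure.ext_of_Ioc' _ _ (fun c d _ => ?_) (fun c d _ => ?_)
  · rw [Measure.restrict_apply measurableSet_Ioc]
    exact ne_top_of_le_ne_top measure_Ioc_lt_top.ne (measure_mono inter_subset_left)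
  · rw [Measure.restrict_apply measurableSet_Ioc, Measure.restrict_apply measurableSet_Ioc,
      Ioc_inter_Ioc]
    rcases lt_or_ge (max c a) (min d b) with hlt | hge
    · exact h _ _ (hla.trans_le (le_max_right _ _)) hlt ((min_le_right _ _).trans_lt hbr)
    · simp [Ioc_eq_empty hge.not_gt]

section TailIntegral

variable {f : ℝ → ℝ≥0∞}

theorem lintegral_Ioi_eq_lintegral_Ioc_add {x y : ℝ} (hxy : x ≤ y) :
    ∫⁻ t in Ioi x, f t = (∫⁻ t in Ioc x y, f t) + ∫⁻ t in Ioi y, f t := by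
  rw [← Ioc_union_Ioi_eq_Ioi hxy, lintegral_union measurableSet_Ioi (Ioc_disjoint_Ioi le_rfl)]

theorem lintegral_Ioc_le_mul {C : ℝ≥0∞} (hC : ∀ t, f t ≤ C) (x y : ℝ) :
    ∫⁻ t in Ioc x y, f t ≤ C * ENNReal.ofReal (y - x) :=
  calc ∫⁻ t in Ioc x y, f t ≤ ∫⁻ _ in Ioc x y, C := lintegral_mono hC
    _ = C * ENNReal.ofReal (y - x) := by rw [setLIntegral_const, Real.volume_Ioc]

theorem lintegral_Ioi_ne_top {C : ℝ≥0∞} (hC : ∀ t, f t ≤ C) (hC_top : C ≠ ∞) {a : ℝ}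
    (ha : ∫⁻ t in Ioi a, f t ≠ ∞) (τ : ℝ) : ∫⁻ t in Ioi τ, f t ≠ ∞ := by
  rcases le_total a τ with h | h
  · exact ne_top_of_le_ne_top ha (lintegral_mono_set (Ioi_subset_Ioi h))
  · rw [lintegral_Ioi_eq_lintegral_Ioc_add h]
    exact ENNReal.add_ne_top.2 ⟨ne_top_of_le_ne_top
      (ENNReal.mul_ne_top hC_top ENNReal.ofReal_ne_top) (lintegral_Ioc_le_mul hC τ a), ha⟩

theorem ofReal_toReal_lintegral_Ioi_sub (htail : ∀ τ, ∫⁻ t in Ioi τ, f t ≠ ∞) {x y : ℝ}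
    (hxy : x ≤ y) :
    ENNReal.ofReal ((∫⁻ t in Ioi x, f t).toReal - (∫⁻ t in Ioi y, f t).toReal) =
      ∫⁻ t in Ioc x y, f t := by
  have hIoc : ∫⁻ t in Ioc x y, f t ≠ ∞ :=
    ne_top_of_le_ne_top (htail x) (lintegral_mono_set Ioc_subset_Ioi_self)
  rw [lintegral_Ioi_eq_lintegral_Ioc_add hxy, ENNReal.toReal_add hIoc (htail y),
    add_sub_cancel_right, ENNReal.ofReal_toReal hIoc]

theorem antitone_toReal_lintegral_Ioi (htail : ∀ τ, ∫⁻ t in Ioi τ, f t ≠ ∞) :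
    Antitone fun τ => (∫⁻ t in Ioi τ, f t).toReal := fun x _ hxy =>
  ENNReal.toReal_mono (htail x) (lintegral_mono_set (Ioi_subset_Ioi hxy))

theorem lipschitzWith_toReal_lintegral_Ioi {C : ℝ≥0∞} (hC : ∀ t, f t ≤ C) (hC_top : C ≠ ∞)
    (htail : ∀ τ, ∫⁻ t in Ioi τ, f t ≠ ∞) :
    LipschitzWith C.toNNReal fun τ => (∫⁻ t in Ioi τ, f t).toReal := by
  refine Real.toNNReal_coe (r := C.toNNReal) ▸ LipschitzWith.of_le_add_mul' _ fun x y => ?_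
  rcases le_total x y with hxy | hyx
  · have hle := (ofReal_toReal_lintegral_Ioi_sub htail hxy).trans_le (lintegral_Ioc_le_mul hC x y)
    rw [ENNReal.ofReal_le_iff_le_toReal (ENNReal.mul_ne_top hC_top ENNReal.ofReal_ne_top),
      ENNReal.toReal_mul, ENNReal.toReal_ofReal (sub_nonneg.2 hxy)] at hle
    rw [Real.dist_eq, abs_of_nonpos (sub_nonpos.2 hxy), neg_sub, ENNReal.coe_toNNReal_eq_toReal]
    linarith
  · have := antitone_toReal_lintegral_Ioi htail hyx
    have : 0 ≤ (C.toNNReal : ℝ) * dist x y := by positivity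
    linarith

end TailIntegral

section Rearrangement

variable {α : Type*} [MeasurableSpace α] {μ : Measure α} {A : Set α} {g : α → ℝ}

theorem distFun_antitone : Antitone (distFun μ A g) := fun _ _ hst =>
  measure_mono fun _ hx => ⟨hx.1, hst.trans_lt hx.2⟩

theorem distFun_le_measure (t : ℝ) : distFun μ A g t ≤ μ A :=
  measure_mono fun _ hx => hx.1

theorem distFun_le_of_forall_gt {t : ℝ} {a : ℝ≥0∞} (h : ∀ t' > t, distFun μ A g t' ≤ a) :
    distFun μ A g t ≤ a := by
  obtain ⟨v, hv_anti, hv_gt, hv_lim⟩ := exists_seq_strictAnti_tendsto t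
  have hunion : {x ∈ A | t < |g x|} = ⋃ k, {x ∈ A | v k < |g x|} := by
    ext x
    simp only [mem_ofPred_eq, mem_iUnion]
    refine ⟨fun ⟨hxA, hx⟩ => ?_, fun ⟨k, hxA, hx⟩ => ⟨hxA, (hv_gt k).trans hx⟩⟩
    obtain ⟨k, hk⟩ := (hv_lim.eventually (gt_mem_nhds hx)).exists
    exact ⟨k, hxA, hk⟩
  have hmono : Monotone fun k => {x ∈ A | v k < |g x|} := fun k l hkl x hx =>
    ⟨hx.1, (hv_anti.antitone hkl).trans_lt hx.2⟩
  rw [distFun, hunion, hmono.measure_iUnion]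
  exact iSup_le fun k => h _ (hv_gt k)

theorem exists_distFun_le_ofReal {p : ℝ} (hp : 0 ≤ p)
    (hfin : ∫⁻ t in Ioi (0 : ℝ), distFun μ A g t ^ p ≠ ∞) {s : ℝ} (hs : 0 < s) :
    {t : ℝ | 0 ≤ t ∧ distFun μ A g t ≤ ENNReal.ofReal s}.Nonempty := by
  by_contra! hempty
  refine hfin (top_le_iff.1 ?_)
  calc ∞ = ENNReal.ofReal s ^ p * volume (Ioi (0 : ℝ)) := by
        rw [Real.volume_Ioi, ENNReal.mul_top (ENNReal.rpow_pos (by simpa) (by simp)).ne']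
    _ = ∫⁻ _ in Ioi (0 : ℝ), ENNReal.ofReal s ^ p := (setLIntegral_const _ _).symm
    _ ≤ ∫⁻ t in Ioi (0 : ℝ), distFun μ A g t ^ p := by
        refine setLIntegral_mono (distFun_antitone.measurable.pow_const p) fun t ht => ?_
        refine ENNReal.rpow_le_rpow (not_le.1 fun hle => ?_).le hp
        exact (eq_empty_iff_forall_notMem.1 hempty) t ⟨le_of_lt ht, hle⟩

/- The hypothesis `hne` below makes the set defining `decRe μ A g s` nonempty; otherwise its
`sInf` is the junk value `0`. -/
theorem decRe_le_iff
    (hne : ∀ s > 0, {t : ℝ | 0 ≤ t ∧ distFun μ A g t ≤ ENNReal.ofReal s}.Nonempty)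
    {s t : ℝ} (hs : 0 < s) (ht : 0 ≤ t) :
    decRe μ A g s ≤ t ↔ distFun μ A g t ≤ ENNReal.ofReal s := by
  have hbdd : BddBelow {t : ℝ | 0 ≤ t ∧ distFun μ A g t ≤ ENNReal.ofReal s} :=
    ⟨0, fun _ h => h.1⟩
  refine ⟨fun h => (distFun_antitone h).trans (distFun_le_of_forall_gt fun t' ht' => ?_),
    fun h => csInf_le hbdd ⟨ht, h⟩⟩
  -- the infimum is attained because `distFun` is right-continuous
  obtain ⟨t'', ht''S, ht''⟩ := (csInf_lt_iff hbdd (hne s hs)).1 ht'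
  exact (distFun_antitone ht''.le).trans ht''S.2

theorem lt_decRe_iff
    (hne : ∀ s > 0, {t : ℝ | 0 ≤ t ∧ distFun μ A g t ≤ ENNReal.ofReal s}.Nonempty)
    {s t : ℝ} (hs : 0 < s) (ht : 0 ≤ t) :
    t < decRe μ A g s ↔ ENNReal.ofReal s < distFun μ A g t := by
  simpa only [not_le] using (decRe_le_iff hne hs ht).not

theorem decRe_nonneg
    (hne : ∀ s > 0, {t : ℝ | 0 ≤ t ∧ distFun μ A g t ≤ ENNReal.ofReal s}.Nonempty)
    {s : ℝ} (hs : 0 < s) : 0 ≤ decRe μ A g s :=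
  le_csInf (hne s hs) fun _ h => h.1

theorem decRe_antitoneOn
    (hne : ∀ s > 0, {t : ℝ | 0 ≤ t ∧ distFun μ A g t ≤ ENNReal.ofReal s}.Nonempty) :
    AntitoneOn (decRe μ A g) (Ioi 0) := fun s hs s' hs' hss' => by
  have hself := (decRe_le_iff hne hs (decRe_nonneg hne hs)).1 le_rfl
  exact (decRe_le_iff hne hs' (decRe_nonneg hne hs)).2
    (hself.trans (ENNReal.ofReal_le_ofReal hss'))

theorem decRe_continuousWithinAt_Ioi
    (hne : ∀ s > 0, {t : ℝ | 0 ≤ t ∧ distFun μ A g t ≤ ENNReal.ofReal s}.Nonempty)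
    {s : ℝ} (hs : 0 < s) : ContinuousWithinAt (decRe μ A g) (Ioi s) s := by
  refine tendsto_order.2 ⟨fun l hl => ?_, fun l hl => ?_⟩
  · rcases lt_or_ge l 0 with hl0 | hl0
    · filter_upwards [self_mem_nhdsWithin] with s' hs'
      exact hl0.trans_le (decRe_nonneg hne (hs.trans hs'))
    · obtain ⟨r, -, hsr, hr⟩ := ENNReal.lt_iff_exists_real_btwn.1 ((lt_decRe_iff hne hs hl0).1 hl)
      filter_upwards [Ioo_mem_nhdsGT (ENNReal.ofReal_lt_ofReal_iff'.1 hsr).1] with s' hs'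
      exact (lt_decRe_iff hne (hs.trans hs'.1) hl0).2
        ((ENNReal.ofReal_le_ofReal hs'.2.le).trans_lt hr)
  · filter_upwards [self_mem_nhdsWithin] with s' hs'
    exact (decRe_antitoneOn hne hs (hs.trans hs') (le_of_lt hs')).trans_lt hl

theorem restrict_Ioc_decRe_superlevel_eq
    (hne : ∀ s > 0, {t : ℝ | 0 ≤ t ∧ distFun μ A g t ≤ ENNReal.ofReal s}.Nonempty)
    (hA : μ A ≠ ∞) {F : StieltjesFunction ℝ} (hF : ∀ s, F s = -decRe μ A g s)
    {x y r : ℝ} (hx : 0 < x) (hxy : x ≤ y) (hr : 0 < r) :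
    volume.restrict (Ioc (decRe μ A g y) (decRe μ A g x)) {t | r < (distFun μ A g t).toReal} =
      F.measure.restrict (Ioc x y) {s | r < s} := by
  set d := decRe μ A g
  have hlevel : ∀ {t}, 0 ≤ t → (r < (distFun μ A g t).toReal ↔ t < d r) := fun ht => by
    rw [lt_decRe_iff hne hr ht, ENNReal.ofReal_lt_iff_lt_toReal hr.le
      ((distFun_le_measure _).trans_lt hA.lt_top).ne]
  have hset : {t | r < (distFun μ A g t).toReal} ∩ Ioc (d y) (d x) =
      Ioc (d y) (d x) ∩ Iio (d r) := by
    ext t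
    simp only [mem_inter_iff, mem_ofPred_eq, mem_Iio]
    refine ⟨fun ⟨hrt, ht⟩ => ⟨ht, ?_⟩, fun ⟨ht, htr⟩ => ⟨?_, ht⟩⟩ <;>
      have ht0 := (decRe_nonneg hne (hx.trans_le hxy)).trans ht.1.le
    exacts [(hlevel ht0).1 hrt, (hlevel ht0).2 htr]
  have hset' : {s | r < s} ∩ Ioc x y = Ioc (max x r) y := by
    ext s
    simp only [mem_inter_iff, mem_ofPred_eq, mem_Ioc, max_lt_iff]
    tauto
  have hmin : min (d x) (d r) = d (max x r) := by
    rcases le_total r x with hrx | hxr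
    · rw [max_eq_left hrx, min_eq_left (decRe_antitoneOn hne hr hx hrx)]
    · rw [max_eq_right hxr, min_eq_right (decRe_antitoneOn hne hx hr hxr)]
  rw [Measure.restrict_apply' measurableSet_Ioc, Measure.restrict_apply' measurableSet_Ioc,
    hset, hset', Real.volume_Ioc_inter_Iio, StieltjesFunction.measure_Ioc, hF, hF, hmin,
    neg_sub_neg]

theorem lintegral_Ioc_decRe_distFun_rpow
    (hne : ∀ s > 0, {t : ℝ | 0 ≤ t ∧ distFun μ A g t ≤ ENNReal.ofReal s}.Nonempty)
    (hA : μ A ≠ ∞) {p : ℝ} (hp : 0 < p) {F : StieltjesFunction ℝ}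
    (hF : ∀ s, F s = -decRe μ A g s) {x y : ℝ} (hx : 0 < x) (hxy : x ≤ y) :
    ∫⁻ t in Ioc (decRe μ A g y) (decRe μ A g x), distFun μ A g t ^ p =
      ∫⁻ s in Ioc x y, ENNReal.ofReal (s ^ p) ∂F.measure := by
  set I := Ioc (decRe μ A g y) (decRe μ A g x)
  set m := fun t => (distFun μ A g t).toReal
  calc ∫⁻ t in I, distFun μ A g t ^ p = ∫⁻ t in I, ENNReal.ofReal (m t ^ p) := by
        refine lintegral_congr fun t => ?_
        rw [← ENNReal.ofReal_rpow_of_nonneg ENNReal.toReal_nonneg hp.le,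
          ENNReal.ofReal_toReal ((distFun_le_measure t).trans_lt hA.lt_top).ne]
    _ = ENNReal.ofReal p * ∫⁻ r in Ioi 0,
          volume.restrict I {t | r < m t} * ENNReal.ofReal (r ^ (p - 1)) :=
        lintegral_rpow_eq_lintegral_meas_lt_mul _ (ae_of_all _ fun _ => ENNReal.toReal_nonneg)
          distFun_antitone.measurable.ennreal_toReal.aemeasurable hp
    _ = ENNReal.ofReal p * ∫⁻ r in Ioi 0,
          F.measure.restrict (Ioc x y) {s | r < s} * ENNReal.ofReal (r ^ (p - 1)) := by
        rw [setLIntegral_congr_fun measurableSet_Ioi fun r hr => by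
          rw [restrict_Ioc_decRe_superlevel_eq hne hA hF hx hxy hr]]
    _ = ∫⁻ s in Ioc x y, ENNReal.ofReal (s ^ p) ∂F.measure :=
        (lintegral_rpow_eq_lintegral_meas_lt_mul _ (f := fun s => s)
          ((ae_restrict_iff' measurableSet_Ioc).2 (ae_of_all _ fun s hs => (hx.trans hs.1).le))
          aemeasurable_id hp).symm

end Rearrangement

theorem stieltjes_chain_rule_K_general {n : ℕ}
    (Ω : Set (EuclideanSpace ℝ (Fin n)))
    (hΩbdd : Bornology.IsBounded Ω)
    (u : EuclideanSpace ℝ (Fin n) → ℝ)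
    (hfin : ∫⁻ t in Set.Ioi (0 : ℝ), (distFun volume Ω u t) ^ (1 - 1 / (n : ℝ)) ≠ ∞)
    (K : ℝ → ℝ)
    (hK : ∀ τ : ℝ, K τ =
      (∫⁻ t in Set.Ioi τ, (distFun volume Ω u t) ^ (1 - 1 / (n : ℝ))).toReal)
    (F G : StieltjesFunction ℝ)
    (hF : ∀ s : ℝ, F s = - decRe volume Ω u s)
    (hG : ∀ s ∈ Set.Ioo (0 : ℝ) (volume Ω).toReal, G s = K (decRe volume Ω u s)) :
    MonotoneOn (fun s => K (decRe volume Ω u s)) (Set.Ioo 0 (volume Ω).toReal) ∧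
    (∀ s ∈ Set.Ioo (0 : ℝ) (volume Ω).toReal,
      ContinuousWithinAt (fun s => K (decRe volume Ω u s)) (Set.Ici s) s) ∧
    (∀ E ⊆ Set.Ioo (0 : ℝ) (volume Ω).toReal, MeasurableSet E →
      G.measure E = ∫⁻ s in E, ENNReal.ofReal (s ^ (1 - 1 / (n : ℝ))) ∂F.measure) := by
  set p := 1 - 1 / (n : ℝ)
  have hp : 0 < p := by
    -- `p = 0` (i.e. `n = 1`) would make `hfin` the integral of `1` over `(0, ∞)`
    refine (sub_nonneg.2 (by simpa only [one_div] using Nat.cast_inv_le_one n)).lt_of_ne'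
      fun (hp0 : p = 0) => hfin ?_
    simp [hp0]
  have hΩ : volume Ω ≠ ∞ := hΩbdd.measure_lt_top.ne
  have hne := fun s (hs : s > 0) => exists_distFun_le_ofReal hp.le hfin hs
  have hbound : ∀ t, distFun volume Ω u t ^ p ≤ volume Ω ^ p := fun t =>
    ENNReal.rpow_le_rpow (distFun_le_measure t) hp.le
  have hbound_top : volume Ω ^ p ≠ ∞ := ENNReal.rpow_ne_top_of_nonneg hp.le hΩ
  have htail := lintegral_Ioi_ne_top hbound hbound_top hfin
  obtain rfl : K = fun τ => (∫⁻ t in Ioi τ, distFun volume Ω u t ^ p).toReal := funext hK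
  refine ⟨fun s hs s' hs' hss' =>
      antitone_toReal_lintegral_Ioi htail (decRe_antitoneOn hne hs.1 hs'.1 hss'),
    fun s hs => ?_, fun E hE hEm => ?_⟩
  · exact (lipschitzWith_toReal_lintegral_Ioi hbound hbound_top htail).continuous.continuousAt
      |>.comp_continuousWithinAt
        (continuousWithinAt_Ioi_iff_Ici.1 (decRe_continuousWithinAt_Ioi hne hs.1))
  · have hIoo : G.measure.restrict (Ioo 0 (volume Ω).toReal) =
        (F.measure.withDensity fun s => ENNReal.ofReal (s ^ p)).restrict
          (Ioo 0 (volume Ω).toReal) := by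
      refine Measure.restrict_Ioo_eq_of_Ioc fun a b ha hab hb => ?_
      rw [StieltjesFunction.measure_Ioc, hG a ⟨ha, hab.trans hb⟩, hG b ⟨ha.trans hab, hb⟩,
        ofReal_toReal_lintegral_Ioi_sub htail (decRe_antitoneOn hne ha (ha.trans hab) hab.le),
        lintegral_Ioc_decRe_distFun_rpow hne hΩ hp hF ha hab.le,
        withDensity_apply _ measurableSet_Ioc]
    rw [← Measure.restrict_eq_self _ hE, hIoo, Measure.restrict_eq_self _ hE,
      withDensity_apply _ hEm]

/-- **Chain rule for `𝒦(u*)`:** with `𝒦(τ) = ∫_τ^∞ μ(t)^{1-1/n} dt`, the map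
`s ↦ 𝒦(u*(s))` is nondecreasing and right-continuous on `(0, |Ω|)`, and its
Lebesgue–Stieltjes measure equals `s^{1-1/n} d(-Du*)(s)` there. The Stieltjes
functions `F` and `G` represent `-u*` and `𝒦(u*)` respectively. -/
theorem stieltjes_chain_rule_K {n : ℕ} (hn : 0 < n)
    (Ω : Set (EuclideanSpace ℝ (Fin n))) (hΩmeas : MeasurableSet Ω)
    (hΩbdd : Bornology.IsBounded Ω)
    (u : EuclideanSpace ℝ (Fin n) → ℝ) (humeas : Measurable u)
    (hu0 : ∀ x ∈ Ω, 0 ≤ u x)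
    (hfin : ∫⁻ t in Set.Ioi (0 : ℝ), (distFun volume Ω u t) ^ (1 - 1 / (n : ℝ)) ≠ ∞)
    (K : ℝ → ℝ)
    (hK : ∀ τ : ℝ, K τ =
      (∫⁻ t in Set.Ioi τ, (distFun volume Ω u t) ^ (1 - 1 / (n : ℝ))).toReal)
    (F G : StieltjesFunction ℝ)
    (hF : ∀ s : ℝ, F s = - decRe volume Ω u s)
    (hG : ∀ s ∈ Set.Ioo (0 : ℝ) (volume Ω).toReal, G s = K (decRe volume Ω u s)) :
    MonotoneOn (fun s => K (decRe volume Ω u s)) (Set.Ioo 0 (volume Ω).toReal) ∧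
    (∀ s ∈ Set.Ioo (0 : ℝ) (volume Ω).toReal,
      ContinuousWithinAt (fun s => K (decRe volume Ω u s)) (Set.Ici s) s) ∧
    (∀ E ⊆ Set.Ioo (0 : ℝ) (volume Ω).toReal, MeasurableSet E →
      G.measure E = ∫⁻ s in E, ENNReal.ofReal (s ^ (1 - 1 / (n : ℝ))) ∂F.measure) :=
  stieltjes_chain_rule_K_general Ω hΩbdd u hfin K hK F G hF hG
end
end
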